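/- arXiv:2312.00729 — 2 statements merged into one kernel-verified Lean document; each statement's English description precedes it below -/
import Mathlib

section
/- If 1 < δ < Φ = (1+√5)/2, then p(δ) > 0, h_δ(y) → 0 as y → 0⁺, and h_δ(y) > 0 for all y with 0 < y < δ^(2/(1-δ²)). -/
open Set Filter Topology

theorem h_pos_for_delta_lt_phi (δ : ℝ) (hδ1 : 1 < δ)
    (hδ2 : δ < (1 + Real.sqrt 5) / 2) :
    let p : ℝ := -δ^2 + δ + 1
    let h : ℝ → ℝ := fun y => (y ^ p - δ^2 * y ^ δ) / (δ^2 - δ)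
    0 < p ∧
    Filter.Tendsto h (nhdsWithin 0 (Set.Ioi 0)) (nhds 0) ∧
    ∀ y : ℝ, 0 < y → y < δ ^ (2 / (1 - δ^2)) → 0 < h y := by
  intro p h
  have hs : Real.sqrt 5 ^ 2 = 5 := Real.sq_sqrt (by norm_num)
  have hp : 0 < p := by
    show 0 < -δ^2 + δ + 1
    have h5 : (0:ℝ) ≤ Real.sqrt 5 := Real.sqrt_nonneg 5
    nlinarith [sq_nonneg (2*δ - 1 - Real.sqrt 5)]
  have hδ0 : (0:ℝ) < δ := by linarith
  have hδd : 0 < δ^2 - δ := by nlinarith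
  refine ⟨hp, ?_, ?_⟩
  · have h1 : Filter.Tendsto (fun y : ℝ => y ^ p) (nhdsWithin 0 (Set.Ioi 0)) (nhds 0) := by
      have := (Real.continuousAt_rpow_const 0 p (Or.inr hp.le)).tendsto
      rw [Real.zero_rpow hp.ne'] at this
      exact this.mono_left nhdsWithin_le_nhds
    have h2 : Filter.Tendsto (fun y : ℝ => y ^ δ) (nhdsWithin 0 (Set.Ioi 0)) (nhds 0) := by
      have := (Real.continuousAt_rpow_const 0 δ (Or.inr hδ0.le)).tendsto
      rw [Real.zero_rpow hδ0.ne'] at this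
      exact this.mono_left nhdsWithin_le_nhds
    have : Filter.Tendsto h (nhdsWithin 0 (Set.Ioi 0)) (nhds ((0 - δ^2 * 0) / (δ^2 - δ))) :=
      ((h1.sub (h2.const_mul _)).div_const _)
    simpa using this
  · intro y hy hy2
    have hkey : δ ^ 2 < y ^ (1 - δ^2) := by
      have hne : 1 - δ^2 < 0 := by nlinarith
      have h1 := Real.rpow_lt_rpow_of_neg hy hy2 hne
      rwa [← Real.rpow_mul hδ0.le, div_mul_cancel₀ _ (ne_of_lt hne),
        show ((2:ℝ)) = ((2:ℕ):ℝ) by norm_num, Real.rpow_natCast] at h1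
    have hsplit : y ^ p = y ^ (1 - δ^2) * y ^ δ := by
      rw [← Real.rpow_add hy]; show y ^ (-δ^2 + δ + 1) = _; ring_nf
    have hyd : 0 < y ^ δ := Real.rpow_pos_of_pos hy δ
    have : 0 < y ^ p - δ^2 * y ^ δ := by
      rw [hsplit]
      nlinarith [mul_lt_mul_of_pos_right hkey hyd]
    exact div_pos this hδd
end

section
/- Suppose 1 < δ < Φ, k > 0, γ > 0, and let τ_m = (p(δ)/δ)^(1/(δ²-1)) with p(δ) = -δ²+δ+1. If γ(1+k) = F_δ(τ_m), where F_δ(τ) = τ^(p(δ)) - τ^δ, then the quantity λ₂ = δ² τ_m^(δ²-1) + γ(1+k)(δ²-δ) τ_m^(-p(δ)) equals 1. -/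
/-! At the fold point `τ_m` the relation `τ_m ^ (δ² - 1) = p / δ` holds, and `δ - p = δ² - 1`.
Substituting `γ (1 + k) = τ_m ^ p - τ_m ^ δ`, the second eigenvalue becomes
`δ p + (δ² - δ) (1 - p / δ) = p + δ² - δ = 1`. -/

open Real goldenRatio

theorem neg_sq_add_self_add_one_eq_mul (δ : ℝ) : -δ ^ 2 + δ + 1 = (φ - δ) * (δ - ψ) := by
  linear_combination goldenRatio_mul_goldenConj - δ * goldenRatio_add_goldenConj

theorem neg_sq_add_self_add_one_pos {δ : ℝ} (hψ : ψ < δ) (hφ : δ < φ) : 0 < -δ ^ 2 + δ + 1 := by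
  rw [neg_sq_add_self_add_one_eq_mul]
  exact mul_pos (sub_pos.2 hφ) (sub_pos.2 hψ)

theorem second_eigenvalue_eq_one_of_fold {δ τ : ℝ} (hτ : 0 < τ)
    (hfold : δ * τ ^ (δ ^ 2 - 1) = -δ ^ 2 + δ + 1) :
    δ ^ 2 * τ ^ (δ ^ 2 - 1) + (τ ^ (-δ ^ 2 + δ + 1) - τ ^ δ) * (δ ^ 2 - δ)
      * τ ^ (-(-δ ^ 2 + δ + 1)) = 1 := by
  have hp_cancel : τ ^ (-δ ^ 2 + δ + 1) * τ ^ (-(-δ ^ 2 + δ + 1)) = 1 := by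
    rw [← rpow_add hτ, add_neg_cancel, rpow_zero]
  have hδ_sub_p : τ ^ δ * τ ^ (-(-δ ^ 2 + δ + 1)) = τ ^ (δ ^ 2 - 1) := by
    rw [← rpow_add hτ]
    ring_nf
  linear_combination (δ ^ 2 - δ) * hp_cancel - (δ ^ 2 - δ) * hδ_sub_p + hfold

theorem eigenvalue_one_at_BT_general (δ k γ : ℝ) (hδ1 : 1 < δ)
    (hδ2 : δ < (1 + Real.sqrt 5) / 2) :
    let p : ℝ := -δ^2 + δ + 1
    let τm : ℝ := (p / δ) ^ (1 / (δ^2 - 1))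
    γ * (1 + k) = τm ^ p - τm ^ δ →
    δ^2 * τm ^ (δ^2 - 1) + γ * (1 + k) * (δ^2 - δ) * τm ^ (-p) = 1 := by
  intro p τm hγk
  have hδ : 0 < δ := one_pos.trans hδ1
  have hp : 0 < p := neg_sq_add_self_add_one_pos (goldenConj_neg.trans hδ) hδ2
  have hτm : 0 < τm := rpow_pos_of_pos (div_pos hp hδ) _
  have hτm_pow : τm ^ (δ ^ 2 - 1) = p / δ := by
    simp only [τm, one_div]
    exact rpow_inv_rpow (div_pos hp hδ).le (by nlinarith)
  have hfold : δ * τm ^ (δ ^ 2 - 1) = p := by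
    rw [hτm_pow]
    field_simp
  rw [hγk]
  exact second_eigenvalue_eq_one_of_fold hτm hfold

theorem eigenvalue_one_at_BT (δ k γ : ℝ) (hδ1 : 1 < δ)
    (hδ2 : δ < (1 + Real.sqrt 5) / 2) (hk : 0 < k) (hγ : 0 < γ) :
    let p : ℝ := -δ^2 + δ + 1
    let τm : ℝ := (p / δ) ^ (1 / (δ^2 - 1))
    γ * (1 + k) = τm ^ p - τm ^ δ →
    δ^2 * τm ^ (δ^2 - 1) + γ * (1 + k) * (δ^2 - δ) * τm ^ (-p) = 1 :=
  eigenvalue_one_at_BT_general δ k γ hδ1 hδ2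
end
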